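/- Let α ∈ (0,1) be irrational with convergents p_n/q_n and n ≥ 1 odd. If k ∈ {1, …, q_{n+1} − 1} and p ∈ ℤ satisfy 0 < kα + p < q_{n−1}α − p_{n−1}, then k = q_{n−1} + i·q_n and p = −p_{n−1} − i·p_n for some i ∈ {1, …, a_{n+1} − 1}. -/

import Mathlib

open scoped BigOperators

/-!
Write `β_m = |q_m α - p_m|`. Since `q_n p_{n-1} - p_n q_{n-1} = ±1`, every `(k, p) ∈ ℤ²` is
`k = x q_n + y q_{n-1}`, `p = -(x p_n + y p_{n-1})` with `x, y ∈ ℤ`, and then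
`kα + p = y β_{n-1} - x β_n`. The `β_m` are positive and `β_{n-1} = a_{n+1} β_n + β_{n+1}`,
so the two strict inequalities on `kα + p` together with
`1 ≤ k < q_{n+1} = a_{n+1} q_n + q_{n-1}` leave only `y = 1`, `1 ≤ x ≤ a_{n+1} - 1`.
-/

/-- The Gauss map `x ↦ 1/x - ⌊1/x⌋` (with `G 0 = 0`). -/
noncomputable def gaussMap (x : ℝ) : ℝ := if x = 0 then 0 else 1 / x - ⌊1 / x⌋

/-- Iterates `α_n = G^n(α)` of the Gauss map. -/
noncomputable def alphaSeq (α : ℝ) (n : ℕ) : ℝ := gaussMap^[n] α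

/-- Partial quotients `a_n` of the continued fraction of `α`. -/
noncomputable def aSeq (α : ℝ) : ℕ → ℤ
  | 0 => 0
  | n + 1 => ⌊1 / alphaSeq α n⌋

/-- Denominators `q_n` of the best rational approximations of `α`. -/
noncomputable def qSeq (α : ℝ) : ℕ → ℤ
  | 0 => 1
  | 1 => ⌊1 / α⌋
  | n + 2 => qSeq α n + aSeq α (n + 2) * qSeq α (n + 1)

/-- Numerators `p_n` of the best rational approximations of `α`. -/
noncomputable def pSeq (α : ℝ) : ℕ → ℤ
  | 0 => 0
  | 1 => 1
  | n + 2 => pSeq α n + aSeq α (n + 2) * pSeq α (n + 1)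

theorem eq_one_and_mem_Icc_of_linear_form_mem_Ioo {b₀ b₁ : ℝ} {Q₀ Q₁ a x y : ℤ}
    (hb₀ : 0 ≤ b₀) (hb₁ : 0 < b₁) (hab : a * b₁ < b₀) (hQ₀ : 0 ≤ Q₀) (hQ₁ : 0 < Q₁)
    (hform : y * b₀ - x * b₁ ∈ Set.Ioo 0 b₀)
    (hk₁ : 1 ≤ x * Q₁ + y * Q₀) (hk₂ : x * Q₁ + y * Q₀ ≤ Q₀ + a * Q₁ - 1) :
    y = 1 ∧ x ∈ Set.Icc 1 (a - 1) := by
  obtain ⟨hlow, hup⟩ := hform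
  have hy₁ : 1 ≤ y := by
    by_contra! hy
    have hy₀ : (y : ℝ) ≤ 0 := by exact_mod_cast (show y ≤ 0 by omega)
    have hx : x < 0 := by
      have : (x : ℝ) * b₁ < 0 := by nlinarith
      exact_mod_cast neg_of_mul_neg_left this hb₁.le
    nlinarith
  have hy : y = 1 := by
    by_contra hy
    have hy₂ : (2 : ℝ) ≤ y := by exact_mod_cast (show (2 : ℤ) ≤ y by omega)
    have hx : a < x := by
      have : (a : ℝ) * b₁ < x * b₁ := by nlinarith
      exact_mod_cast lt_of_mul_lt_mul_right this hb₁.le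
    nlinarith
  subst hy
  rw [Int.cast_one, one_mul] at hup hlow
  have hx : 0 < x := by
    have : (0 : ℝ) < x * b₁ := by linarith
    exact_mod_cast pos_of_mul_pos_left this hb₁.le
  refine ⟨rfl, hx, ?_⟩
  nlinarith

lemma qSeq_add_two (α : ℝ) (m : ℕ) :
    qSeq α (m + 2) = qSeq α m + aSeq α (m + 2) * qSeq α (m + 1) := rfl

lemma pSeq_add_two (α : ℝ) (m : ℕ) :
    pSeq α (m + 2) = pSeq α m + aSeq α (m + 2) * pSeq α (m + 1) := rfl

lemma qSeq_mul_pSeq_sub_pSeq_mul_qSeq (α : ℝ) (m : ℕ) :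
    qSeq α (m + 1) * pSeq α m - pSeq α (m + 1) * qSeq α m = (-1) ^ (m + 1) := by
  induction m with
  | zero => simp [qSeq, pSeq]
  | succ m ih =>
    rw [qSeq_add_two, pSeq_add_two]
    linear_combination (-1 : ℤ) * ih

lemma exists_eq_convergent_combination (α : ℝ) (m : ℕ) (k p : ℤ) :
    ∃ x y : ℤ, k = x * qSeq α (m + 1) + y * qSeq α m ∧
      p = -(x * pSeq α (m + 1) + y * pSeq α m) := by
  have hdet := qSeq_mul_pSeq_sub_pSeq_mul_qSeq α m
  have hsq : (-1 : ℤ) ^ (m + 1) * (-1) ^ (m + 1) = 1 := by rw [← mul_pow]; norm_num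
  generalize (-1 : ℤ) ^ (m + 1) = ε at hdet hsq
  refine ⟨ε * (pSeq α m * k + qSeq α m * p),
    -ε * (pSeq α (m + 1) * k + qSeq α (m + 1) * p), ?_, ?_⟩
  · linear_combination (-ε * k) * hdet - k * hsq
  · linear_combination (-ε * p) * hdet - p * hsq

/-- `β_m = |q_m α - p_m|`, the sign being `(-1)^m`. -/
noncomputable def betaSeq (α : ℝ) (m : ℕ) : ℝ :=
  (-1 : ℝ) ^ m * ((qSeq α m : ℝ) * α - (pSeq α m : ℝ))

lemma betaSeq_of_even (α : ℝ) {m : ℕ} (hm : Even m) :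
    betaSeq α m = (qSeq α m : ℝ) * α - (pSeq α m : ℝ) := by
  simp [betaSeq, hm.neg_one_pow]

lemma betaSeq_add_two (α : ℝ) (m : ℕ) :
    betaSeq α (m + 2) = betaSeq α m - (aSeq α (m + 2) : ℝ) * betaSeq α (m + 1) := by
  simp only [betaSeq, qSeq_add_two, pSeq_add_two]
  push_cast
  ring

lemma convergent_combination_mul_add (α : ℝ) (m : ℕ) (x y : ℤ) :
    ((x * qSeq α (m + 1) + y * qSeq α m : ℤ) : ℝ) * α +
        ((-(x * pSeq α (m + 1) + y * pSeq α m) : ℤ) : ℝ) =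
      (-1) ^ m * (y * betaSeq α m - x * betaSeq α (m + 1)) := by
  have hsq : (-1 : ℝ) ^ m * (-1) ^ m = 1 := by rw [← mul_pow]; norm_num
  simp only [betaSeq, pow_succ]
  push_cast
  linear_combination
    (-(y * ((qSeq α m : ℝ) * α - pSeq α m) + x * ((qSeq α (m + 1) : ℝ) * α - pSeq α (m + 1)))) * hsq

lemma gaussMap_of_ne_zero {x : ℝ} (hx : x ≠ 0) : gaussMap x = Int.fract (1 / x) := by
  rw [gaussMap, if_neg hx, Int.fract]

lemma alphaSeq_succ (α : ℝ) (m : ℕ) : alphaSeq α (m + 1) = gaussMap (alphaSeq α m) :=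
  Function.iterate_succ_apply' _ _ _

lemma irrational_alphaSeq {α : ℝ} (hirr : Irrational α) (m : ℕ) :
    Irrational (alphaSeq α m) := by
  induction m with
  | zero => exact hirr
  | succ m ih =>
    rw [alphaSeq_succ, gaussMap_of_ne_zero ih.ne_zero, Int.fract, one_div]
    exact ih.inv.sub_intCast _

lemma alphaSeq_mem_Ioo {α : ℝ} (hα : α ∈ Set.Ioo (0 : ℝ) 1) (hirr : Irrational α) (m : ℕ) :
    alphaSeq α m ∈ Set.Ioo (0 : ℝ) 1 := by
  cases m with
  | zero => exact hα
  | succ m =>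
    have hirr' := irrational_alphaSeq hirr (m + 1)
    rw [alphaSeq_succ, gaussMap_of_ne_zero (irrational_alphaSeq hirr m).ne_zero] at hirr' ⊢
    exact ⟨(Int.fract_nonneg _).lt_of_ne' hirr'.ne_zero, Int.fract_lt_one _⟩

lemma one_le_aSeq {α : ℝ} (hα : α ∈ Set.Ioo (0 : ℝ) 1) (hirr : Irrational α) (m : ℕ) :
    1 ≤ aSeq α (m + 1) := by
  obtain ⟨h0, h1⟩ := alphaSeq_mem_Ioo hα hirr m
  exact Int.le_floor.2 (by exact_mod_cast one_le_one_div h0 h1.le)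

lemma qSeq_pos {α : ℝ} (hα : α ∈ Set.Ioo (0 : ℝ) 1) (hirr : Irrational α) (m : ℕ) :
    0 < qSeq α m := by
  suffices ∀ m, 0 < qSeq α m ∧ 0 < qSeq α (m + 1) from (this m).1
  intro m
  induction m with
  | zero => exact ⟨one_pos, one_le_aSeq hα hirr 0⟩
  | succ m ih =>
    have ha := one_le_aSeq hα hirr (m + 1)
    refine ⟨ih.2, ?_⟩
    rw [qSeq_add_two]
    nlinarith [ih.1, ih.2]

lemma betaSeq_succ {α : ℝ} (hirr : Irrational α) (m : ℕ) :
    betaSeq α (m + 1) = betaSeq α m * alphaSeq α (m + 1) := by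
  induction m with
  | zero =>
    have hα := hirr.ne_zero
    rw [alphaSeq_succ, show alphaSeq α 0 = α from rfl, gaussMap_of_ne_zero hα, Int.fract]
    simp only [betaSeq, qSeq, pSeq]
    field_simp
    ring
  | succ m ih =>
    have hne := (irrational_alphaSeq hirr (m + 1)).ne_zero
    rw [betaSeq_add_two, ih, alphaSeq_succ α (m + 1), gaussMap_of_ne_zero hne, Int.fract]
    simp only [aSeq]
    field_simp

lemma betaSeq_pos {α : ℝ} (hα : α ∈ Set.Ioo (0 : ℝ) 1) (hirr : Irrational α) (m : ℕ) :
    0 < betaSeq α m := by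
  induction m with
  | zero => simpa [betaSeq, qSeq, pSeq] using hα.1
  | succ m ih =>
    rw [betaSeq_succ hirr]
    exact mul_pos ih (alphaSeq_mem_Ioo hα hirr (m + 1)).1

theorem stmt15_general (α : ℝ) (hα : α ∈ Set.Ioo (0 : ℝ) 1) (hirr : Irrational α)
    (n : ℕ) (hodd : Odd n) (k p : ℤ)
    (hk1 : 1 ≤ k) (hk2 : k ≤ qSeq α (n + 1) - 1)
    (hlow : 0 < (k : ℝ) * α + (p : ℝ))
    (hup : (k : ℝ) * α + (p : ℝ) < (qSeq α (n - 1) : ℝ) * α - (pSeq α (n - 1) : ℝ)) :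
    ∃ i : ℤ, 1 ≤ i ∧ i ≤ aSeq α (n + 1) - 1 ∧
      k = qSeq α (n - 1) + i * qSeq α n ∧ p = -pSeq α (n - 1) - i * pSeq α n := by
  obtain ⟨j, hj, rfl⟩ : ∃ j, Even j ∧ n = j + 1 := by
    obtain ⟨t, rfl⟩ := hodd
    exact ⟨2 * t, even_two_mul t, rfl⟩
  rw [Nat.add_sub_cancel] at hup ⊢
  rw [← betaSeq_of_even α hj] at hup
  obtain ⟨x, y, rfl, rfl⟩ := exists_eq_convergent_combination α j k p
  rw [convergent_combination_mul_add, hj.neg_one_pow, one_mul] at hlow hup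
  rw [qSeq_add_two] at hk2
  have hab : (aSeq α (j + 2) : ℝ) * betaSeq α (j + 1) < betaSeq α j := by
    linarith [betaSeq_add_two α j, betaSeq_pos hα hirr (j + 2)]
  obtain ⟨rfl, hx₁, hx₂⟩ := eq_one_and_mem_Icc_of_linear_form_mem_Ioo
    (betaSeq_pos hα hirr j).le (betaSeq_pos hα hirr (j + 1)) hab
    (qSeq_pos hα hirr j).le (qSeq_pos hα hirr (j + 1)) ⟨hlow, hup⟩ hk1 hk2
  exact ⟨x, hx₁, hx₂, by ring, by ring⟩

/-- Let `α ∈ (0,1)` be irrational with convergents `p_n/q_n`, `n ≥ 1` odd. If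
`k ∈ {1,…,q_{n+1}−1}` and `p ∈ ℤ` satisfy `0 < kα + p < q_{n−1}α − p_{n−1}`, then
`k = q_{n−1} + i·q_n` and `p = −p_{n−1} − i·p_n` for some `i ∈ {1,…,a_{n+1}−1}`. -/
theorem stmt15 (α : ℝ) (hα : α ∈ Set.Ioo (0 : ℝ) 1) (hirr : Irrational α)
    (n : ℕ) (hodd : Odd n) (hn : 1 ≤ n) (k p : ℤ)
    (hk1 : 1 ≤ k) (hk2 : k ≤ qSeq α (n + 1) - 1)
    (hlow : 0 < (k : ℝ) * α + (p : ℝ))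
    (hup : (k : ℝ) * α + (p : ℝ) < (qSeq α (n - 1) : ℝ) * α - (pSeq α (n - 1) : ℝ)) :
    ∃ i : ℤ, 1 ≤ i ∧ i ≤ aSeq α (n + 1) - 1 ∧
      k = qSeq α (n - 1) + i * qSeq α n ∧ p = -pSeq α (n - 1) - i * pSeq α n :=
  stmt15_general α hα hirr n hodd k p hk1 hk2 hlow hup
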